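/- (Graded-uniqueness theorem.) Let k be a positive integer, Λ a row-finite k-graph without sources, R a commutative ring with 1, and A a ℤ^k-graded ring. If π : KP_R(Λ) → A is a ℤ^k-graded ring homomorphism such that π(rp_v) ≠ 0 for all r ∈ R∖{0} and all v ∈ Λ^0, then π is injective. -/

import Mathlib

/-!
Since the grading of `B` is independent, a graded homomorphism is injective as soon as it kills
no nonzero homogeneous element. Let `x` of degree `n` satisfy `π x = 0`. Expanding every
spanning element `s_l s_{m*}` with (KP4) along all paths of one large degree, `x` becomes a
combination `∑ c_{l,m} s_l s_{m*}` in which all `l` have degree `N` and all `m` degree `M`.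
By (KP3), `s_{l*} x s_m = c_{l,m} p_{s(l)}`, and applying `π` forces `c_{l,m} = 0`.
-/

namespace KP

/-- A `k`-graph: a nonempty countable small category `Λ` together with a degree
functor `d : Λ → ℕ^k` satisfying the unique factorization property.  Objects
(vertices) are identified with identity morphisms via `ident`.  The composition
`comp l m` is only meaningful when `s l = r m`. -/
structure KGraph (k : ℕ) where
  V : Type
  E : Type
  nonemptyV : Nonempty V
  countableE : Countable E
  r : E → V
  s : E → V
  d : E → Fin k → ℕ
  ident : V → E
  comp : E → E → E
  r_ident : ∀ v, r (ident v) = v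
  s_ident : ∀ v, s (ident v) = v
  d_ident : ∀ v, d (ident v) = 0
  r_comp : ∀ ⦃l m : E⦄, s l = r m → r (comp l m) = r l
  s_comp : ∀ ⦃l m : E⦄, s l = r m → s (comp l m) = s m
  d_comp : ∀ ⦃l m : E⦄, s l = r m → d (comp l m) = d l + d m
  comp_assoc : ∀ ⦃l m n : E⦄, s l = r m → s m = r n →
    comp (comp l m) n = comp l (comp m n)
  ident_comp : ∀ l : E, comp (ident (r l)) l = l
  comp_ident : ∀ l : E, comp l (ident (s l)) = l
  eq_ident_of_d_eq_zero : ∀ l : E, d l = 0 → l = ident (r l)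
  factor : ∀ (l : E) (m n : Fin k → ℕ), d l = m + n →
    ∃! p : E × E, d p.1 = m ∧ d p.2 = n ∧ s p.1 = r p.2 ∧ comp p.1 p.2 = l

namespace KGraph

variable {k : ℕ}

/-- `Λ` is row-finite if every `vΛ^n` is finite. -/
def RowFinite (Λ : KGraph k) : Prop :=
  ∀ (v : Λ.V) (n : Fin k → ℕ), {l : Λ.E | Λ.r l = v ∧ Λ.d l = n}.Finite

/-- `Λ` has no sources if every `vΛ^n` is nonempty. -/
def NoSources (Λ : KGraph k) : Prop :=
  ∀ (v : Λ.V) (n : Fin k → ℕ), ∃ l : Λ.E, Λ.r l = v ∧ Λ.d l = n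

/-- `H ⊆ Λ^0` is hereditary if `r(l) ∈ H` implies `s(l) ∈ H`. -/
def HereditarySet (Λ : KGraph k) (H : Set Λ.V) : Prop :=
  ∀ l : Λ.E, Λ.r l ∈ H → Λ.s l ∈ H

/-- `H ⊆ Λ^0` is saturated if `s(vΛ^n) ⊆ H` implies `v ∈ H`. -/
def SaturatedSet (Λ : KGraph k) (H : Set Λ.V) : Prop :=
  ∀ (v : Λ.V) (n : Fin k → ℕ),
    (∀ l : Λ.E, Λ.r l = v → Λ.d l = n → Λ.s l ∈ H) → v ∈ H

open Classical in
/-- The segment `l(p,q)` of a path `l`: the unique middle factor in a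
factorization `l = l'l''l'''` with `d l' = p` and `d l'' = q - p` (when `p ≤ q ≤ d l`). -/
noncomputable def seg (Λ : KGraph k) (l : Λ.E) (p q : Fin k → ℕ) : Λ.E :=
  if h : ∃ t : Λ.E × Λ.E × Λ.E, Λ.d t.1 = p ∧ Λ.d t.2.1 = q - p ∧
      Λ.s t.1 = Λ.r t.2.1 ∧ Λ.s t.2.1 = Λ.r t.2.2 ∧
      Λ.comp t.1 (Λ.comp t.2.1 t.2.2) = l
  then (Classical.choose h).2.1 else l

/-- Aperiodicity in the finite-path formulation of Robertson and Sims. -/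
def Aperiodic (Λ : KGraph k) : Prop :=
  ∀ (v : Λ.V) (m n : Fin k → ℕ), m ≠ n →
    ∃ l : Λ.E, Λ.r l = v ∧ m ⊔ n ≤ Λ.d l ∧
      Λ.seg l m (m + Λ.d l - m ⊔ n) ≠ Λ.seg l n (n + Λ.d l - m ⊔ n)

end KGraph

/-- An infinite path in `Λ`: a degree-preserving functor `x : Ω_k → Λ`,
recorded by its segments `x.f p q = x(p,q)` for `p ≤ q`. -/
structure InfPath {k : ℕ} (Λ : KGraph k) where
  f : (Fin k → ℕ) → (Fin k → ℕ) → Λ.E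
  deg : ∀ p q : Fin k → ℕ, p ≤ q → Λ.d (f p q) = q - p
  compat : ∀ p q u : Fin k → ℕ, p ≤ q → q ≤ u → Λ.s (f p q) = Λ.r (f q u)
  comp_f : ∀ p q u : Fin k → ℕ, p ≤ q → q ≤ u → Λ.comp (f p q) (f q u) = f p u

/-- The vertex `x(n)` of an infinite path. -/
def InfPath.vtx {k : ℕ} {Λ : KGraph k} (x : InfPath Λ) (n : Fin k → ℕ) : Λ.V :=
  Λ.r (x.f n n)

/-- `Λ` is cofinal if for every infinite path `x` and vertex `v` there is `n`
with `vΛx(n)` nonempty. -/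
def KGraph.Cofinal {k : ℕ} (Λ : KGraph k) : Prop :=
  ∀ (x : InfPath Λ) (v : Λ.V), ∃ (n : Fin k → ℕ) (l : Λ.E),
    Λ.r l = v ∧ Λ.s l = x.vtx n

/-- A Kumjian-Pask `Λ`-family in a ring `A`.  `P v = P_v`, `S l = S_l` and
`S' l = S_{l*}`; by convention `S` and `S'` are extended to vertices (paths of
degree `0`) by `S_v = S_{v*} = P_v`. -/
structure KPFamily {k : ℕ} (Λ : KGraph k) (A : Type) [Ring A] where
  P : Λ.V → A
  S : Λ.E → A
  S' : Λ.E → A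
  S_ident : ∀ v, S (Λ.ident v) = P v
  S'_ident : ∀ v, S' (Λ.ident v) = P v
  idem : ∀ v, P v * P v = P v
  orth : ∀ v w, v ≠ w → P v * P w = 0
  mul_S : ∀ ⦃l m : Λ.E⦄, Λ.d l ≠ 0 → Λ.d m ≠ 0 → Λ.s l = Λ.r m →
    S l * S m = S (Λ.comp l m)
  mul_S' : ∀ ⦃l m : Λ.E⦄, Λ.d l ≠ 0 → Λ.d m ≠ 0 → Λ.s l = Λ.r m →
    S' m * S' l = S' (Λ.comp l m)
  P_mul_S : ∀ l : Λ.E, Λ.d l ≠ 0 → P (Λ.r l) * S l = S l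
  S_mul_P : ∀ l : Λ.E, Λ.d l ≠ 0 → S l * P (Λ.s l) = S l
  P_mul_S' : ∀ l : Λ.E, Λ.d l ≠ 0 → P (Λ.s l) * S' l = S' l
  S'_mul_P : ∀ l : Λ.E, Λ.d l ≠ 0 → S' l * P (Λ.r l) = S' l
  KP3_eq : ∀ l : Λ.E, Λ.d l ≠ 0 → S' l * S l = P (Λ.s l)
  KP3_ne : ∀ l m : Λ.E, Λ.d l ≠ 0 → Λ.d l = Λ.d m → l ≠ m → S' l * S m = 0
  KP4 : ∀ (v : Λ.V) (n : Fin k → ℕ), n ≠ 0 → ∀ F : Finset Λ.E,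
    (∀ l : Λ.E, l ∈ F ↔ Λ.r l = v ∧ Λ.d l = n) →
    P v = ∑ l ∈ F, S l * S' l

/-- The Kumjian-Pask algebra of `Λ` with coefficients in `R`: an `R`-algebra
`A` together with a generating Kumjian-Pask family `(p,s)` which is universal
for Kumjian-Pask `Λ`-families, carries a `ℤ^k`-grading with the prescribed
homogeneous components, and in which `r • p_v ≠ 0` for `r ≠ 0`. -/
structure KPAlgebra {k : ℕ} (Λ : KGraph k) (R : Type) [CommRing R]
    (A : Type) [Ring A] [Algebra R A] where
  fam : KPFamily Λ A
  universal : ∀ (B : Type) [Ring B] [Algebra R B] (QT : KPFamily Λ B),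
    ∃! φ : A →ₐ[R] B,
      (∀ v, φ (fam.P v) = QT.P v) ∧
      (∀ l, Λ.d l ≠ 0 → φ (fam.S l) = QT.S l) ∧
      (∀ l, Λ.d l ≠ 0 → φ (fam.S' l) = QT.S' l)
  grading : (Fin k → ℤ) → AddSubgroup A
  grading_mul : ∀ (m n : Fin k → ℤ), ∀ a ∈ grading m, ∀ b ∈ grading n,
    a * b ∈ grading (m + n)
  grading_internal : DirectSum.IsInternal grading
  grading_eq : ∀ n : Fin k → ℤ, (grading n : Set A) =
    ↑(Submodule.span R {x : A | ∃ l m : Λ.E,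
      (fun i => (Λ.d l i : ℤ) - (Λ.d m i : ℤ)) = n ∧ x = fam.S l * fam.S' m})
  smul_P_ne_zero : ∀ (v : Λ.V) (c : R), c ≠ 0 → c • fam.P v ≠ 0

/-- A `G`-grading on a ring `A`: additive subgroups with `A_g A_h ⊆ A_{g+h}`
such that `A` is their internal direct sum. -/
def IsGrading {G A : Type} [AddCommGroup G] [DecidableEq G] [Ring A]
    (gr : G → AddSubgroup A) : Prop :=
  (∀ g h : G, ∀ a ∈ gr g, ∀ b ∈ gr h, a * b ∈ gr (g + h)) ∧
  DirectSum.IsInternal gr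

/-- An ideal `I` is graded when every element of `I` is a sum of homogeneous
elements of `I`, i.e. `I = Σ_g (I ∩ A_g)`. -/
def IsGradedIdeal {G A : Type} [Ring A] (gr : G → AddSubgroup A)
    (I : TwoSidedIdeal A) : Prop :=
  ∀ x ∈ I, x ∈ AddSubgroup.closure {y : A | y ∈ I ∧ ∃ g : G, y ∈ gr g}

/-- An ideal `I` of `KP_R(Λ)` is basic if `c • p_v ∈ I` with `c ≠ 0` implies `p_v ∈ I`. -/
def IsBasic {k : ℕ} {Λ : KGraph k} {R : Type} [CommRing R]
    {A : Type} [Ring A] [Algebra R A] (KP : KPAlgebra Λ R A)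
    (I : TwoSidedIdeal A) : Prop :=
  ∀ (c : R) (v : Λ.V), c ≠ 0 → c • KP.fam.P v ∈ I → KP.fam.P v ∈ I

/-- An ideal is idempotent if it is spanned by products `a * b` with `a, b ∈ I`. -/
def IsIdempotentIdeal {A : Type} [Ring A] (I : TwoSidedIdeal A) : Prop :=
  (I : Set A) ⊆ ↑(AddSubgroup.closure {x : A | ∃ a ∈ I, ∃ b ∈ I, x = a * b})

/-- `RestrCompat Λ H Λ' eV eE` asserts that `Λ'` is (a realization of) the
subgraph `Λ∖H = (Λ^0∖H, {l ∈ Λ : s(l) ∉ H}, r, s)` with the restricted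
structure maps, the identifications being given by the equivalences `eV`, `eE`. -/
def RestrCompat {k : ℕ} (Λ : KGraph k) (H : Set Λ.V) (Λ' : KGraph k)
    (eV : Λ'.V ≃ {v : Λ.V // v ∉ H}) (eE : Λ'.E ≃ {l : Λ.E // Λ.s l ∉ H}) : Prop :=
  (∀ l : Λ'.E, (eV (Λ'.r l)).1 = Λ.r (eE l).1) ∧
  (∀ l : Λ'.E, (eV (Λ'.s l)).1 = Λ.s (eE l).1) ∧
  (∀ l : Λ'.E, Λ'.d l = Λ.d (eE l).1) ∧
  (∀ v : Λ'.V, (eE (Λ'.ident v)).1 = Λ.ident (eV v).1) ∧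
  (∀ l m : Λ'.E, Λ'.s l = Λ'.r m →
    (eE (Λ'.comp l m)).1 = Λ.comp (eE l).1 (eE m).1)

/-- `Ind M`: the ideal of `KP_R(Λ)` induced by a set (ideal) `M` of coefficients,
`Ind M = span_R {c • s_a s_{b*} : c ∈ M, a b ∈ Λ}`. -/
def IndSpan {k : ℕ} {Λ : KGraph k} {R : Type} [CommRing R]
    {A : Type} [Ring A] [Algebra R A] (KP : KPAlgebra Λ R A) (M : Set R) :
    Submodule R A :=
  Submodule.span R {x : A | ∃ c ∈ M, ∃ a b : Λ.E, x = c • (KP.fam.S a * KP.fam.S' b)}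

/-- `Res I = {c ∈ R : c • p_v ∈ I for all v ∈ Λ^0}`. -/
def ResSet {k : ℕ} {Λ : KGraph k} {R : Type} [CommRing R]
    {A : Type} [Ring A] [Algebra R A] (KP : KPAlgebra Λ R A) (I : Set A) : Set R :=
  {c : R | ∀ v : Λ.V, c • KP.fam.P v ∈ I}


theorem _root_.DirectSum.IsInternal.injective_of_map_mem {ι : Type*} [DecidableEq ι]
    {A B : Type*} [AddCommGroup A] [AddCommGroup B] {gA : ι → AddSubgroup A}
    {gB : ι → AddSubgroup B} (hA : DirectSum.IsInternal gA) (hB : DirectSum.IsInternal gB)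
    (φ : A →+ B) (hφ : ∀ i, ∀ a ∈ gA i, φ a ∈ gB i)
    (hker : ∀ i, ∀ a ∈ gA i, φ a = 0 → a = 0) : Function.Injective φ := by
  let φᵢ : ∀ i, gA i →+ gB i := fun i =>
    (φ.comp (gA i).subtype).codRestrict (gB i) fun a => hφ i a a.2
  have hφᵢ : ∀ i, Function.Injective (φᵢ i) := fun i =>
    (injective_iff_map_eq_zero _).2 fun a ha => Subtype.ext (hker i a a.2 (congrArg Subtype.val ha))
  have hcomm : φ.comp (DirectSum.coeAddMonoidHom gA) =
      (DirectSum.coeAddMonoidHom gB).comp (DirectSum.map φᵢ) := by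
    ext i a
    simp only [AddMonoidHom.comp_apply, DirectSum.coeAddMonoidHom_of, DirectSum.map_of]
    rfl
  refine Function.Injective.of_comp_right ?_ hA.surjective
  rw [← AddMonoidHom.coe_comp, hcomm, AddMonoidHom.coe_comp]
  exact hB.injective.comp ((DirectSum.map_injective φᵢ).2 hφᵢ)

lemma KGraph.s_eq_r_of_d_eq_zero {k : ℕ} (Λ : KGraph k) {l : Λ.E} (h : Λ.d l = 0) :
    Λ.s l = Λ.r l := by
  rw [Λ.eq_ident_of_d_eq_zero l h, Λ.s_ident, Λ.r_ident]

namespace KPFamily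

variable {k : ℕ} {Λ : KGraph k} {A : Type} [Ring A] (f : KPFamily Λ A)

lemma S_of_d_eq_zero {l : Λ.E} (h : Λ.d l = 0) : f.S l = f.P (Λ.r l) := by
  conv_lhs => rw [Λ.eq_ident_of_d_eq_zero l h]
  exact f.S_ident _

lemma S'_of_d_eq_zero {l : Λ.E} (h : Λ.d l = 0) : f.S' l = f.P (Λ.r l) := by
  conv_lhs => rw [Λ.eq_ident_of_d_eq_zero l h]
  exact f.S'_ident _

lemma P_r_mul_S (l : Λ.E) : f.P (Λ.r l) * f.S l = f.S l := by
  by_cases h : Λ.d l = 0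
  · rw [f.S_of_d_eq_zero h, f.idem]
  · exact f.P_mul_S l h

lemma S_mul_P_s (l : Λ.E) : f.S l * f.P (Λ.s l) = f.S l := by
  by_cases h : Λ.d l = 0
  · rw [f.S_of_d_eq_zero h, Λ.s_eq_r_of_d_eq_zero h, f.idem]
  · exact f.S_mul_P l h

lemma P_s_mul_S' (l : Λ.E) : f.P (Λ.s l) * f.S' l = f.S' l := by
  by_cases h : Λ.d l = 0
  · rw [f.S'_of_d_eq_zero h, Λ.s_eq_r_of_d_eq_zero h, f.idem]
  · exact f.P_mul_S' l h

lemma S'_mul_P_r (l : Λ.E) : f.S' l * f.P (Λ.r l) = f.S' l := by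
  by_cases h : Λ.d l = 0
  · rw [f.S'_of_d_eq_zero h, f.idem]
  · exact f.S'_mul_P l h

lemma S_mul_S {l m : Λ.E} (h : Λ.s l = Λ.r m) : f.S l * f.S m = f.S (Λ.comp l m) := by
  by_cases hl : Λ.d l = 0
  · rw [Λ.eq_ident_of_d_eq_zero l hl, f.S_ident, ← Λ.s_eq_r_of_d_eq_zero hl, h, Λ.ident_comp,
      f.P_r_mul_S]
  by_cases hm : Λ.d m = 0
  · rw [Λ.eq_ident_of_d_eq_zero m hm, f.S_ident, ← h, Λ.comp_ident, f.S_mul_P_s]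
  exact f.mul_S hl hm h

lemma S'_mul_S' {l m : Λ.E} (h : Λ.s l = Λ.r m) :
    f.S' m * f.S' l = f.S' (Λ.comp l m) := by
  by_cases hl : Λ.d l = 0
  · rw [Λ.eq_ident_of_d_eq_zero l hl, f.S'_ident, ← Λ.s_eq_r_of_d_eq_zero hl, h, Λ.ident_comp,
      f.S'_mul_P_r]
  by_cases hm : Λ.d m = 0
  · rw [Λ.eq_ident_of_d_eq_zero m hm, f.S'_ident, ← h, Λ.comp_ident, f.P_s_mul_S']
  exact f.mul_S' hl hm h

open Classical in
lemma S'_mul_S_of_d_eq {l m : Λ.E} (h : Λ.d l = Λ.d m) :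
    f.S' l * f.S m = if l = m then f.P (Λ.s l) else 0 := by
  by_cases hl : Λ.d l = 0
  · have hm : Λ.d m = 0 := h ▸ hl
    rw [f.S'_of_d_eq_zero hl, f.S_of_d_eq_zero hm, Λ.s_eq_r_of_d_eq_zero hl]
    by_cases hr : Λ.r l = Λ.r m
    · have hlm : l = m := by
        rw [Λ.eq_ident_of_d_eq_zero l hl, Λ.eq_ident_of_d_eq_zero m hm, hr]
      rw [if_pos hlm, hr, f.idem]
    · rw [if_neg (fun hlm => hr (congrArg Λ.r hlm)), f.orth _ _ hr]
  split_ifs with hlm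
  · exact hlm ▸ f.KP3_eq l hl
  · exact f.KP3_ne l m hl h hlm

lemma S_mul_S'_eq_zero {l m : Λ.E} (h : Λ.s l ≠ Λ.s m) : f.S l * f.S' m = 0 := by
  rw [← f.S_mul_P_s l, ← f.P_s_mul_S' m, mul_assoc, ← mul_assoc (f.P _), f.orth _ _ h,
    zero_mul, mul_zero]

lemma P_eq_sum_S_mul_S' (v : Λ.V) (n : Fin k → ℕ) (F : Finset Λ.E)
    (hF : ∀ l, l ∈ F ↔ Λ.r l = v ∧ Λ.d l = n) : f.P v = ∑ l ∈ F, f.S l * f.S' l := by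
  rcases eq_or_ne n 0 with rfl | hn
  · have hFv : F = {Λ.ident v} := by
      refine Finset.eq_singleton_iff_unique_mem.2 ⟨(hF _).2 ⟨Λ.r_ident v, Λ.d_ident v⟩, ?_⟩
      intro l hl
      obtain ⟨hr, hd⟩ := (hF l).1 hl
      rw [Λ.eq_ident_of_d_eq_zero l hd, hr]
    rw [hFv, Finset.sum_singleton, f.S_ident, f.S'_ident, f.idem]
  · exact f.KP4 v n hn F hF

lemma S_mul_S'_eq_sum {l m : Λ.E} (hs : Λ.s l = Λ.s m) (e : Fin k → ℕ) (F : Finset Λ.E)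
    (hF : ∀ η, η ∈ F ↔ Λ.r η = Λ.s l ∧ Λ.d η = e) :
    f.S l * f.S' m = ∑ η ∈ F, f.S (Λ.comp l η) * f.S' (Λ.comp m η) := by
  calc f.S l * f.S' m = f.S l * f.P (Λ.s l) * f.S' m := by rw [f.S_mul_P_s]
    _ = ∑ η ∈ F, f.S l * (f.S η * f.S' η) * f.S' m := by
      rw [f.P_eq_sum_S_mul_S' _ e F hF, Finset.mul_sum, Finset.sum_mul]
    _ = ∑ η ∈ F, f.S (Λ.comp l η) * f.S' (Λ.comp m η) := by
      refine Finset.sum_congr rfl fun η hη => ?_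
      have hl : Λ.s l = Λ.r η := ((hF η).1 hη).1.symm
      rw [← f.S_mul_S hl, ← f.S'_mul_S' (hs ▸ hl), mul_assoc, mul_assoc, mul_assoc]

def monomials (N M : Fin k → ℕ) : Set A :=
  {y | ∃ l m : Λ.E, Λ.d l = N ∧ Λ.d m = M ∧ Λ.s l = Λ.s m ∧ y = f.S l * f.S' m}

open Classical in
lemma S'_mul_mul_S_of_mem_monomials {N M : Fin k → ℕ} {y : A} (hy : y ∈ f.monomials N M)
    {l m : Λ.E} (hl : Λ.d l = N) (hm : Λ.d m = M) (hs : Λ.s l = Λ.s m) :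
    f.S' l * y * f.S m = if y = f.S l * f.S' m then f.P (Λ.s l) else 0 := by
  have hassoc : ∀ a b c d : A, a * (b * c) * d = (a * b) * (c * d) := by
    intros
    simp only [mul_assoc]
  split_ifs with hlm
  · rw [hlm, hassoc, f.S'_mul_S_of_d_eq rfl, f.S'_mul_S_of_d_eq rfl, if_pos rfl,
      if_pos rfl, hs, f.idem]
  obtain ⟨l', m', hl', hm', -, rfl⟩ := hy
  have hne : ¬(l = l' ∧ m' = m) := by
    rintro ⟨rfl, rfl⟩
    exact hlm rfl
  rw [hassoc, f.S'_mul_S_of_d_eq (hl.trans hl'.symm),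
    f.S'_mul_S_of_d_eq (hm'.trans hm.symm)]
  split_ifs <;> simp_all

lemma eq_zero_of_mem_span_monomials {R : Type} [CommRing R] [Algebra R A] {B : Type} [Ring B]
    (φ : A →+* B) (hφ : ∀ (c : R) (v : Λ.V), c ≠ 0 → φ (c • f.P v) ≠ 0) {N M : Fin k → ℕ}
    {x : A} (hx : x ∈ Submodule.span R (f.monomials N M)) (hφx : φ x = 0) : x = 0 := by
  classical
  obtain ⟨c, hc, rfl⟩ := Submodule.mem_span_set.1 hx
  refine Finset.sum_eq_zero fun y hy => ?_
  obtain ⟨l, m, hl, hm, hs, rfl⟩ := hc hy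
  have hcoeff : f.S' l * (c.sum fun y r => r • y) * f.S m = c (f.S l * f.S' m) • f.P (Λ.s l) := by
    rw [Finsupp.sum, Finset.mul_sum, Finset.sum_mul]
    simp_rw [mul_smul_comm, smul_mul_assoc]
    rw [Finset.sum_congr rfl fun y hy =>
      congrArg _ (f.S'_mul_mul_S_of_mem_monomials (hc hy) hl hm hs)]
    simp_rw [smul_ite, smul_zero]
    rw [Finset.sum_ite_eq' c.support, if_pos hy]
  refine (hφ _ (Λ.s l) (Finsupp.mem_support_iff.1 hy) ?_).elim
  rw [← hcoeff, map_mul, map_mul, hφx, mul_zero, zero_mul]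

lemma exists_mem_span_monomials {R : Type} [CommRing R] [Algebra R A] (hrf : Λ.RowFinite)
    {n : Fin k → ℤ} {x : A} (hx : x ∈ Submodule.span R {y : A | ∃ l m : Λ.E,
      (fun i => (Λ.d l i : ℤ) - (Λ.d m i : ℤ)) = n ∧ y = f.S l * f.S' m}) :
    ∃ N M : Fin k → ℕ, x ∈ Submodule.span R (f.monomials N M) := by
  -- Generalized to all large `N`, so that two summands can be expanded to a common bidegree.
  suffices h : ∃ N₀ : Fin k → ℕ, ∀ N, N₀ ≤ N →
      x ∈ Submodule.span R (f.monomials N fun i => (N i - n i).toNat) from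
    let ⟨N₀, hN₀⟩ := h; ⟨N₀, _, hN₀ N₀ le_rfl⟩
  induction hx using Submodule.span_induction with
  | mem y hy =>
    obtain ⟨l, m, hn, rfl⟩ := hy
    refine ⟨Λ.d l, fun N hN => ?_⟩
    by_cases hs : Λ.s l = Λ.s m
    swap
    · rw [f.S_mul_S'_eq_zero hs]
      exact zero_mem _
    have hF := hrf (Λ.s l) (N - Λ.d l)
    rw [f.S_mul_S'_eq_sum hs (N - Λ.d l) hF.toFinset fun η => hF.mem_toFinset]
    refine Submodule.sum_mem _ fun η hη => Submodule.subset_span ?_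
    obtain ⟨hr, hd⟩ := hF.mem_toFinset.1 hη
    have hlη : Λ.s l = Λ.r η := hr.symm
    have hmη : Λ.s m = Λ.r η := hs ▸ hlη
    refine ⟨_, _, ?_, ?_, ?_, rfl⟩
    · rw [Λ.d_comp hlη, hd]
      exact add_tsub_cancel_of_le hN
    · rw [Λ.d_comp hmη, hd]
      funext i
      have hi := congrFun hn i
      have hNi := hN i
      simp only [Pi.add_apply, Pi.sub_apply] at hi hNi ⊢
      omega
    · rw [Λ.s_comp hlη, Λ.s_comp hmη]
  | zero => exact ⟨0, fun _ _ => zero_mem _⟩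
  | add y z _ _ hy hz =>
    obtain ⟨N₁, h₁⟩ := hy
    obtain ⟨N₂, h₂⟩ := hz
    exact ⟨N₁ ⊔ N₂, fun N hN => add_mem (h₁ N (le_sup_left.trans hN))
      (h₂ N (le_sup_right.trans hN))⟩
  | smul c y _ hy =>
    obtain ⟨N₀, h⟩ := hy
    exact ⟨N₀, fun N hN => Submodule.smul_mem _ c (h N hN)⟩

end KPFamily

lemma KPAlgebra.eq_zero_of_mem_grading {R : Type} [CommRing R] {A : Type} [Ring A]
    [Algebra R A] {k : ℕ} {Λ : KGraph k} (KP : KPAlgebra Λ R A) (hrf : Λ.RowFinite)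
    {B : Type} [Ring B] (φ : A →+* B) (hφ : ∀ (c : R) (v : Λ.V), c ≠ 0 → φ (c • KP.fam.P v) ≠ 0)
    {n : Fin k → ℤ} {x : A} (hx : x ∈ KP.grading n) (hφx : φ x = 0) : x = 0 := by
  have hx' : x ∈ (KP.grading n : Set A) := hx
  rw [KP.grading_eq] at hx'
  obtain ⟨N, M, hNM⟩ := KP.fam.exists_mem_span_monomials hrf hx'
  exact KP.fam.eq_zero_of_mem_span_monomials φ hφ hNM hφx

theorem graded_uniqueness_general (k : ℕ) (Λ : KGraph k)
    (hrf : Λ.RowFinite)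
    (R : Type) [CommRing R] (A : Type) [Ring A] [Algebra R A]
    (KP : KPAlgebra Λ R A)
    (B : Type) [Ring B] (grB : (Fin k → ℤ) → AddSubgroup B)
    (hgrB : IsGrading grB)
    (π : A →+* B)
    (hgraded : ∀ (n : Fin k → ℤ), ∀ a ∈ KP.grading n, π a ∈ grB n)
    (hv : ∀ (c : R) (v : Λ.V), c ≠ 0 → π (c • KP.fam.P v) ≠ 0) :
    Function.Injective π :=
  KP.grading_internal.injective_of_map_mem hgrB.2 π.toAddMonoidHom hgraded
    fun _ _ hx => KP.eq_zero_of_mem_grading hrf π hv hx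

/-- **Theorem 4.1 (the graded-uniqueness theorem).**  Let `Λ` be a row-finite
`k`-graph without sources, `R` a commutative ring with `1`, and `B` a
`ℤ^k`-graded ring.  If `π : KP_R(Λ) → B` is a `ℤ^k`-graded ring homomorphism
such that `π (c • p_v) ≠ 0` for all `c ∈ R∖{0}` and `v ∈ Λ^0`, then `π` is
injective. -/
theorem graded_uniqueness (k : ℕ) (hk : 0 < k) (Λ : KGraph k)
    (hrf : Λ.RowFinite) (hns : Λ.NoSources)
    (R : Type) [CommRing R] (A : Type) [Ring A] [Algebra R A]
    (KP : KPAlgebra Λ R A)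
    (B : Type) [Ring B] (grB : (Fin k → ℤ) → AddSubgroup B)
    (hgrB : IsGrading grB)
    (π : A →+* B)
    (hgraded : ∀ (n : Fin k → ℤ), ∀ a ∈ KP.grading n, π a ∈ grB n)
    (hv : ∀ (c : R) (v : Λ.V), c ≠ 0 → π (c • KP.fam.P v) ≠ 0) :
    Function.Injective π :=
  graded_uniqueness_general k Λ hrf R A KP B grB hgrB π hgraded hv

end KP
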